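/- arXiv:1309.4921 — 4 statements merged into one kernel-verified Lean document; each statement's English description precedes it below -/
import Mathlib

section
/- Let h be the fuzzy soft map induced by ordinary functions u : X → Y and p : E → E'. Then the preimage commutes with complement: h⁻¹(gᶜ) = (h⁻¹(g))ᶜ for every fuzzy soft set g over Y. Moreover, if u and p are surjective, then (h(f))ᶜ ≤ h(fᶜ) for every fuzzy soft set f over X. -/
/-- The image of a fuzzy soft set under the fuzzy soft map induced by `u : X → Y`
and `p : E → E'`. -/
noncomputable def fsImage {X Y E E' : Type*} (u : X → Y) (p : E → E')
    (f : E → X → ℝ) : E' → Y → ℝ :=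
  fun e' y => sSup {r : ℝ | ∃ e x, p e = e' ∧ u x = y ∧ r = f e x}

/-- The preimage of a fuzzy soft set under the fuzzy soft map induced by
`u : X → Y` and `p : E → E'`. -/
def fsPreimage {X Y E E' : Type*} (u : X → Y) (p : E → E')
    (g : E' → Y → ℝ) : E → X → ℝ :=
  fun e x => g (p e) (u x)

/-- The preimage under an induced fuzzy soft map commutes with complements, and,
when `u` and `p` are surjective, the complement of the image is below the image
of the complement. -/
theorem fsPreimage_compl_and_compl_fsImage_le {X Y E E' : Type*}
    (u : X → Y) (p : E → E') :
    (∀ g : E' → Y → ℝ, (∀ e' y, g e' y ∈ Set.Icc (0 : ℝ) 1) →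
      fsPreimage u p (fun e' y => 1 - g e' y) =
        (fun e x => 1 - fsPreimage u p g e x)) ∧
    (Function.Surjective u → Function.Surjective p →
      ∀ f : E → X → ℝ, (∀ e x, f e x ∈ Set.Icc (0 : ℝ) 1) →
        ∀ e' y, 1 - fsImage u p f e' y ≤
          fsImage u p (fun e x => 1 - f e x) e' y) := by
  constructor
  · intro g _
    rfl
  · intro hu hp f hf e' y
    obtain ⟨e, he⟩ := hp e'
    obtain ⟨x, hx⟩ := hu y
    have hmem : f e x ∈ {r : ℝ | ∃ e x, p e = e' ∧ u x = y ∧ r = f e x} :=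
      ⟨e, x, he, hx, rfl⟩
    have hbdd : BddAbove {r : ℝ | ∃ e x, p e = e' ∧ u x = y ∧ r = f e x} := by
      refine ⟨1, ?_⟩
      rintro r ⟨a, b, -, -, rfl⟩
      exact (hf a b).2
    have h1 : f e x ≤ fsImage u p f e' y := le_csSup hbdd hmem
    have hmem2 : 1 - f e x ∈
        {r : ℝ | ∃ a b, p a = e' ∧ u b = y ∧ r = 1 - f a b} :=
      ⟨e, x, he, hx, rfl⟩
    have hbdd2 : BddAbove {r : ℝ | ∃ a b, p a = e' ∧ u b = y ∧ r = 1 - f a b} := by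
      refine ⟨1, ?_⟩
      rintro r ⟨a, b, -, -, rfl⟩
      linarith [(hf a b).1]
    calc 1 - fsImage u p f e' y ≤ 1 - f e x := by linarith
    _ ≤ _ := le_csSup hbdd2 hmem2
end

section
/- Let (X, τ) be a topological space and E a parameter set. Then the collection w'(w(τ)) = { f : E → X → [0,1] : for every e ∈ E and every t ∈ [0,1), the set {x ∈ X : f e x > t} is open in τ } is a fuzzy soft topology over X. -/
/-- A fuzzy soft topology over `X` with parameter set `E`: a collection of fuzzy
soft sets (functions `E → X → [0,1]`) containing the constant functions `0` and
`1`, closed under pointwise suprema of arbitrary subfamilies and under pointwise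
minima of pairs. -/
def IsFSTopology {X E : Type*} (τ : Set (E → X → ℝ)) : Prop :=
  (fun _ _ => (0 : ℝ)) ∈ τ ∧ (fun _ _ => (1 : ℝ)) ∈ τ ∧
  (∀ S : Set (E → X → ℝ), S ⊆ τ →
    (fun e x => sSup ((fun f => f e x) '' S)) ∈ τ) ∧
  (∀ f ∈ τ, ∀ g ∈ τ, (fun e x => min (f e x) (g e x)) ∈ τ)

/-- Given a topological space `X` and a parameter set `E`, the collection
`w'(w(τ))` of all fuzzy soft sets `f` such that every strict superlevel set
`{x | f e x > t}` with `t ∈ [0,1)` is open is a fuzzy soft topology over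
`X`. -/
theorem isFSTopology_superlevel {X E : Type*} [TopologicalSpace X] :
    IsFSTopology {f : E → X → ℝ | (∀ e x, f e x ∈ Set.Icc (0 : ℝ) 1) ∧
      ∀ e, ∀ t ∈ Set.Ico (0 : ℝ) 1, IsOpen {x : X | t < f e x}} := by
  refine ⟨⟨fun e x => ⟨le_refl 0, zero_le_one⟩, fun e t ht => ?_⟩,
    ⟨fun e x => ⟨zero_le_one, le_refl 1⟩, fun e t ht => ?_⟩, ?_, ?_⟩
  · convert isOpen_empty using 1
    ext x; simp [not_lt.2 ht.1]
  · convert isOpen_univ using 1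
    ext x; simp [ht.2]
  · intro S hS
    refine ⟨fun e x => ⟨Real.sSup_nonneg ?_, Real.sSup_le ?_ zero_le_one⟩,
      fun e t ht => ?_⟩
    · rintro y ⟨f, hf, rfl⟩; exact ((hS hf).1 e x).1
    · rintro y ⟨f, hf, rfl⟩; exact ((hS hf).1 e x).2
    · have hbdd : ∀ x : X, BddAbove ((fun f => f e x) '' S) := by
        intro x
        exact ⟨1, by rintro y ⟨f, hf, rfl⟩; exact ((hS hf).1 e x).2⟩
      have : {x : X | t < sSup ((fun f => f e x) '' S)} =
          ⋃ f ∈ S, {x : X | t < f e x} := by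
        ext x
        simp only [Set.mem_setOf_eq, Set.mem_iUnion]
        constructor
        · intro hx
          rcases Set.eq_empty_or_nonempty S with rfl | hne
          · simp at hx; exact absurd hx (not_lt.2 ht.1)
          · rcases (lt_csSup_iff (hbdd x) (hne.image _)).1 hx with ⟨y, ⟨f, hf, rfl⟩, hy⟩
            exact ⟨f, hf, hy⟩
        · rintro ⟨f, hf, hfx⟩
          exact lt_of_lt_of_le hfx (le_csSup (hbdd x) ⟨f, hf, rfl⟩)
      rw [this]
      exact isOpen_biUnion fun f hf => (hS hf).2 e t ht
  · rintro f ⟨hf1, hf2⟩ g ⟨hg1, hg2⟩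
    refine ⟨fun e x => ⟨le_min (hf1 e x).1 (hg1 e x).1,
      min_le_of_left_le (hf1 e x).2⟩, fun e t ht => ?_⟩
    have : {x : X | t < min (f e x) (g e x)} =
        {x : X | t < f e x} ∩ {x : X | t < g e x} := by
      ext x; simp [lt_min_iff]
    rw [this]
    exact (hf2 e t ht).inter (hg2 e t ht)
end

section
/- Let u : X → Y and let p : E → E' be a bijection, and let h be the induced fuzzy soft map. Then the image under h of the fuzzy soft point over X determined by x ∈ X and λ : E → (0,1] is the fuzzy soft point over Y determined by u x and λ ∘ p⁻¹: for all e' ∈ E' and y ∈ Y, h(x̃) e' y = λ (p⁻¹ e') if y = u x, and h(x̃) e' y = 0 otherwise. -/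
open Classical

/-- If `p : E → E'` is a bijection (with inverse `q`), the image under the
induced fuzzy soft map of the fuzzy soft point determined by `x : X` and
`lam : E → (0,1]` is the fuzzy soft point over `Y` determined by `u x` and
`lam ∘ p⁻¹`. -/
theorem fsImage_point {X Y E E' : Type*} (u : X → Y) (p : E → E') (q : E' → E)
    (hqp : Function.LeftInverse q p) (hpq : Function.RightInverse q p)
    (x : X) (lam : E → ℝ) (hlam : ∀ e, lam e ∈ Set.Ioc (0 : ℝ) 1) :
    ∀ (e' : E') (y : Y),
      fsImage u p (fun e z => if z = x then lam e else 0) e' y =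
        if y = u x then lam (q e') else 0 := by
  intro e' y
  set S : Set ℝ := {r : ℝ | ∃ e z, p e = e' ∧ u z = y ∧
    r = (fun e z => if z = x then lam e else 0) e z} with hS
  have hval : fsImage u p (fun e z => if z = x then lam e else 0) e' y = sSup S := rfl
  rw [hval]
  by_cases hy : y = u x
  · rw [if_pos hy]
    have hmem : lam (q e') ∈ S := by
      exact ⟨q e', x, hpq e', hy.symm, by simp⟩
    have hub : ∀ r ∈ S, r ≤ lam (q e') := by
      rintro r ⟨e, z, hpe, huz, hr⟩
      simp only at hr
      by_cases hz : z = x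
      · have : e = q e' := by rw [← hpe, hqp]
        rw [hr, if_pos hz, this]
      · rw [hr, if_neg hz]
        exact le_of_lt (hlam _).1
    exact le_antisymm (csSup_le ⟨_, hmem⟩ hub) (le_csSup ⟨_, hub⟩ hmem)
  · rw [if_neg hy]
    have hzero : ∀ r ∈ S, r = 0 := by
      rintro r ⟨e, z, hpe, huz, hr⟩
      simp only at hr
      by_cases hz : z = x
      · exact absurd (hz ▸ huz) (fun h => hy h.symm)
      · rw [hr, if_neg hz]
    by_cases hne : S.Nonempty
    · obtain ⟨r, hr⟩ := hne
      have h0 : (0 : ℝ) ∈ S := hzero r hr ▸ hr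
      refine le_antisymm (csSup_le ⟨r, hr⟩ (fun s hs => (hzero s hs).le)) (le_csSup ⟨0, fun s hs => (hzero s hs).le⟩ h0)
    · rw [Set.not_nonempty_iff_eq_empty.mp hne, Real.sSup_empty]
end

section
/- Let X be a real normed space with its norm topology τ and let E be a parameter set. Let δ = { f : E → X → [0,1] : for every e ∈ E and every t ∈ [0,1), the set {z ∈ X : f e z > t} is open in τ }. Then the fuzzy soft topological space (X, E, δ) is fuzzy soft Hausdorff: for any two fuzzy soft points x̃ (determined by x ∈ X, λ : E → (0,1]) and ỹ (determined by y ∈ X, γ : E → (0,1]) with x ≠ y, there exist f, g ∈ δ such that λ e ≤ f e x and γ e ≤ g e y for all e ∈ E, and min( f e z , g e z ) = 0 for all e ∈ E and z ∈ X. -/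
/-- The fuzzy soft topology over a real normed space `X` generated by the norm
(the collection of fuzzy soft sets all of whose strict superlevel sets at levels
`t ∈ [0,1)` are open for the norm topology) is fuzzy soft Hausdorff: any two
fuzzy soft points with distinct supports can be separated by fuzzy soft open
sets whose pointwise minimum vanishes identically. -/
theorem fsNormTopology_hausdorff {X : Type*} [NormedAddCommGroup X]
    [NormedSpace ℝ X] (E : Type*) :
    ∀ (x y : X), x ≠ y → ∀ (lam gam : E → ℝ),
      (∀ e, lam e ∈ Set.Ioc (0 : ℝ) 1) → (∀ e, gam e ∈ Set.Ioc (0 : ℝ) 1) →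
      ∃ f ∈ {f : E → X → ℝ | (∀ e z, f e z ∈ Set.Icc (0 : ℝ) 1) ∧
          ∀ e, ∀ t ∈ Set.Ico (0 : ℝ) 1, IsOpen {z : X | t < f e z}},
        ∃ g ∈ {g : E → X → ℝ | (∀ e z, g e z ∈ Set.Icc (0 : ℝ) 1) ∧
          ∀ e, ∀ t ∈ Set.Ico (0 : ℝ) 1, IsOpen {z : X | t < g e z}},
        (∀ e, lam e ≤ f e x) ∧ (∀ e, gam e ≤ g e y) ∧
        ∀ e z, min (f e z) (g e z) = 0 := by
  intro x y hxy lam gam hlam hgam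
  classical
  set r : ℝ := dist x y / 2 with hr
  have hrpos : 0 < r := by
    have : 0 < dist x y := dist_pos.mpr hxy
    positivity
  refine ⟨fun _ z => if z ∈ Metric.ball x r then 1 else 0, ?_,
         fun _ z => if z ∈ Metric.ball y r then 1 else 0, ?_, ?_, ?_, ?_⟩
  · refine ⟨fun e z => ?_, fun e t ht => ?_⟩
    · simp only; split <;> simp
    · have : {z : X | t < if z ∈ Metric.ball x r then (1:ℝ) else 0}
          = Metric.ball x r := by
        ext z
        simp only [Set.mem_setOf_eq]
        split <;> rename_i h <;> simp [h, ht.1.not_gt, ht.2]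
      rw [this]; exact Metric.isOpen_ball
  · refine ⟨fun e z => ?_, fun e t ht => ?_⟩
    · simp only; split <;> simp
    · have : {z : X | t < if z ∈ Metric.ball y r then (1:ℝ) else 0}
          = Metric.ball y r := by
        ext z
        simp only [Set.mem_setOf_eq]
        split <;> rename_i h <;> simp [h, ht.1.not_gt, ht.2]
      rw [this]; exact Metric.isOpen_ball
  · intro e
    simp [Metric.mem_ball, hrpos, (hlam e).2]
  · intro e
    simp [Metric.mem_ball, hrpos, (hgam e).2]
  · intro e z
    by_cases h1 : z ∈ Metric.ball x r
    · have h2 : z ∉ Metric.ball y r := by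
        simp only [Metric.mem_ball] at h1 ⊢
        intro h2
        have := dist_triangle x z y
        rw [dist_comm x z] at this
        linarith [this, hr]
      simp [h1, h2]
    · simp only [h1, if_false, min_def]
      split <;> simp
end
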